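/- arXiv:2506.20630 — 3 statements merged into one kernel-verified Lean document; each statement's English description precedes it below -/
import Mathlib

section
/- Let ρ > 0. Suppose x̄ ∈ X is feasible and minimizes Φ over the feasible set, with Φ* := Φ(x̄); suppose x̄_ρ ∈ X minimizes Φ_ρ := Φ + ρP over X, with Φ_ρ* := Φ_ρ(x̄_ρ); and suppose λ* ∈ ℝᵐ has nonnegative components and satisfies Φ* ≤ Φ(z) + ⟨λ*, c(z)⟩ for all z ∈ X, with Λ := ‖λ*‖. Then for every x ∈ X one has ‖[c(x)]₊‖ ≤ 2Λ/ρ + √(2(Φ_ρ(x) − Φ_ρ*)/ρ). -/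
/-!
Since `x̄` is feasible it carries no penalty, so `Φ_ρ* ≤ Φ_ρ(x̄) = Φ*`. The multiplier inequality,
the sign of `λ*` and Cauchy–Schwarz give `Φ* ≤ Φ(x) + Λ t` with `t = ‖[c(x)]₊‖`. Hence
`ρ t² / 2 ≤ Λ t + (Φ_ρ(x) − Φ_ρ*)`, and solving this quadratic inequality in `t` gives the bound.
-/

open Finset

lemma sum_max_zero_sq_eq_zero {ι : Type*} [Fintype ι] {v : ι → ℝ} (hv : ∀ i, v i ≤ 0) :
    ∑ i, max (v i) 0 ^ 2 = 0 :=
  sum_eq_zero fun i _ => by rw [max_eq_right (hv i), sq, mul_zero]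

lemma sum_mul_le_sqrt_mul_sqrt_sum_max_zero_sq {ι : Type*} [Fintype ι] {lam v : ι → ℝ}
    (hlam : ∀ i, 0 ≤ lam i) :
    ∑ i, lam i * v i ≤ √(∑ i, lam i ^ 2) * √(∑ i, max (v i) 0 ^ 2) :=
  calc ∑ i, lam i * v i ≤ ∑ i, lam i * max (v i) 0 :=
        sum_le_sum fun i _ => mul_le_mul_of_nonneg_left (le_max_left _ _) (hlam i)
    _ ≤ _ := Real.sum_mul_le_sqrt_mul_sqrt _ _ _

lemma le_two_mul_div_add_sqrt_of_half_mul_sq_le {a Λ D t : ℝ} (ha : 0 < a) (hΛ : 0 ≤ Λ)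
    (h : a / 2 * t ^ 2 ≤ Λ * t + D) :
    t ≤ 2 * Λ / a + √(2 * D / a) := by
  set b := √(2 * D / a)
  have hb : 0 ≤ b := Real.sqrt_nonneg _
  have hab : 2 * D ≤ a * b ^ 2 := by
    rw [Real.sq_sqrt', ← div_le_iff₀' ha]
    exact le_max_left _ _
  by_contra! hlt
  have hgap : a * b < a * t - 2 * Λ := by
    rw [div_add' _ _ _ ha.ne', div_lt_iff₀ ha] at hlt
    linarith
  nlinarith [mul_nonneg ha.le hb, mul_nonneg hΛ (mul_nonneg ha.le hb)]

theorem penalty_feasibility_bound_general {n m : ℕ}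
    (X : Set (EuclideanSpace ℝ (Fin n)))
    (c : EuclideanSpace ℝ (Fin n) → Fin m → ℝ)
    (Φ : EuclideanSpace ℝ (Fin n) → ℝ)
    (ρ : ℝ) (hρ : 0 < ρ)
    (xbar : EuclideanSpace ℝ (Fin n)) (hxbar_mem : xbar ∈ X)
    (hxbar_feas : ∀ i, c xbar i ≤ 0)
    (xρ : EuclideanSpace ℝ (Fin n))
    (hxρ_opt : ∀ u ∈ X,
      Φ xρ + ρ * ((1 : ℝ) / 2 * ∑ i, max (c xρ i) 0 ^ 2) ≤
        Φ u + ρ * ((1 : ℝ) / 2 * ∑ i, max (c u i) 0 ^ 2))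
    (lam : Fin m → ℝ) (hlam_nonneg : ∀ i, 0 ≤ lam i)
    (hlag : ∀ z ∈ X, Φ xbar ≤ Φ z + ∑ i, lam i * c z i) :
    ∀ x ∈ X, Real.sqrt (∑ i, max (c x i) 0 ^ 2) ≤
      2 * Real.sqrt (∑ i, lam i ^ 2) / ρ +
      Real.sqrt (2 * ((Φ x + ρ * ((1 : ℝ) / 2 * ∑ i, max (c x i) 0 ^ 2)) -
        (Φ xρ + ρ * ((1 : ℝ) / 2 * ∑ i, max (c xρ i) 0 ^ 2))) / ρ) := by
  intro x hx
  have hpenalty_le : Φ xρ + ρ * ((1 : ℝ) / 2 * ∑ i, max (c xρ i) 0 ^ 2) ≤ Φ xbar := by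
    simpa [sum_max_zero_sq_eq_zero hxbar_feas] using hxρ_opt xbar hxbar_mem
  have hlag_le := sum_mul_le_sqrt_mul_sqrt_sum_max_zero_sq (v := c x) hlam_nonneg
  apply le_two_mul_div_add_sqrt_of_half_mul_sq_le hρ (Real.sqrt_nonneg _)
  rw [Real.sq_sqrt (sum_nonneg fun i _ => sq_nonneg _)]
  linarith [hlag x hx]

/-- Feasibility bound via the quadratic penalty: under existence of a feasible minimizer
`x̄` and Lagrange multipliers `λ* ≥ 0` with `Φ* ≤ Φ(z) + ⟨λ*, c(z)⟩` on `X`, and a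
minimizer `x̄_ρ` of `Φ_ρ = Φ + ρP` over `X`, every `x ∈ X` satisfies
`‖[c(x)]₊‖ ≤ 2Λ/ρ + √(2(Φ_ρ(x) − Φ_ρ*)/ρ)` with `Λ = ‖λ*‖`. -/
theorem penalty_feasibility_bound {n m : ℕ}
    (X : Set (EuclideanSpace ℝ (Fin n))) (hXne : X.Nonempty) (hXconv : Convex ℝ X)
    (c : EuclideanSpace ℝ (Fin n) → Fin m → ℝ)
    (Φ : EuclideanSpace ℝ (Fin n) → ℝ)
    (ρ : ℝ) (hρ : 0 < ρ)
    (xbar : EuclideanSpace ℝ (Fin n)) (hxbar_mem : xbar ∈ X)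
    (hxbar_feas : ∀ i, c xbar i ≤ 0)
    (hxbar_opt : ∀ z ∈ X, (∀ i, c z i ≤ 0) → Φ xbar ≤ Φ z)
    (xρ : EuclideanSpace ℝ (Fin n)) (hxρ_mem : xρ ∈ X)
    (hxρ_opt : ∀ u ∈ X,
      Φ xρ + ρ * ((1 : ℝ) / 2 * ∑ i, max (c xρ i) 0 ^ 2) ≤
        Φ u + ρ * ((1 : ℝ) / 2 * ∑ i, max (c u i) 0 ^ 2))
    (lam : Fin m → ℝ) (hlam_nonneg : ∀ i, 0 ≤ lam i)
    (hlag : ∀ z ∈ X, Φ xbar ≤ Φ z + ∑ i, lam i * c z i) :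
    ∀ x ∈ X, Real.sqrt (∑ i, max (c x i) 0 ^ 2) ≤
      2 * Real.sqrt (∑ i, lam i ^ 2) / ρ +
      Real.sqrt (2 * ((Φ x + ρ * ((1 : ℝ) / 2 * ∑ i, max (c x i) 0 ^ 2)) -
        (Φ xρ + ρ * ((1 : ℝ) / 2 * ∑ i, max (c xρ i) 0 ^ 2))) / ρ) :=
  penalty_feasibility_bound_general X c Φ ρ hρ xbar hxbar_mem hxbar_feas xρ hxρ_opt lam hlam_nonneg
    hlag
end

section
/- Let β ≥ 1, γ > 0 with Lγ < β, let x, z ∈ X and δ ∈ ℝⁿ. Define y := (1 − 1/β)x + (1/β)z and g := ∇φ(y) + δ; let z⁺ ∈ X satisfy γ(⟨g, z⁺⟩ + ψ(z⁺)) + ½‖z⁺ − z‖² ≤ γ(⟨g, u⟩ + ψ(u)) + ½‖u − z‖² for every u ∈ X; and define x⁺ := (1 − 1/β)x + (1/β)z⁺. Then for every u ∈ X: βγ(Φ(x⁺) − Φ(u)) + ½‖u − z⁺‖² ≤ (β − 1)γ(Φ(x) − Φ(u)) + ½‖u − z‖² + γ⟨δ, u − z⁺⟩ − ((β − Lγ)/(2β))·‖z⁺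 − z‖². -/
open RealInnerProductSpace

section Aux
open Set Filter Topology

variable {E : Type*} [NormedAddCommGroup E] [InnerProductSpace ℝ E] [CompleteSpace E]

lemma lineDeriv_aux (φ : E → ℝ) (φ' : E → E) (hφgrad : ∀ p, HasGradientAt φ (φ' p) p)
    (a v : E) (t : ℝ) :
    HasDerivAt (fun s : ℝ => φ (a + s • v)) ⟪φ' (a + t • v), v⟫ t := by
  have hl : HasDerivAt (fun s : ℝ => a + s • v) v t := by
    simpa using ((hasDerivAt_id t).smul_const v).const_add a
  have := ((hφgrad (a + t • v)).hasFDerivAt).comp_hasDerivAt t hl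
  simp [InnerProductSpace.toDual_apply_apply] at this
  exact this

lemma grad_convex_le (φ : E → ℝ) (hφ : ConvexOn ℝ Set.univ φ) (φ' : E → E)
    (hφgrad : ∀ p, HasGradientAt φ (φ' p) p) (p w : E) :
    φ p + ⟪φ' p, w - p⟫ ≤ φ w := by
  have hd : HasDerivAt (fun s : ℝ => φ (p + s • (w - p))) ⟪φ' p, w - p⟫ 0 := by
    simpa using lineDeriv_aux φ φ' hφgrad p (w - p) 0
  have hslope := hasDerivAt_iff_tendsto_slope.mp hd
  have hmono : Tendsto (slope (fun s : ℝ => φ (p + s • (w - p))) 0) (𝓝[>] 0)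
      (𝓝 ⟪φ' p, w - p⟫) :=
    hslope.mono_left (nhdsWithin_mono 0 fun x hx => ne_of_gt hx)
  have key : ⟪φ' p, w - p⟫ ≤ φ w - φ p := by
    refine le_of_tendsto hmono ?_
    filter_upwards [Ioc_mem_nhdsGT_of_mem (Set.mem_Ico.mpr ⟨le_refl (0:ℝ), one_pos⟩)] with t ht
    have hcomb : φ (p + t • (w - p)) ≤ (1 - t) * φ p + t * φ w := by
      have hpt : p + t • (w - p) = (1 - t) • p + t • w := by module
      rw [hpt]
      simpa using hφ.2 (Set.mem_univ p) (Set.mem_univ w)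
        (by linarith [ht.2] : (0:ℝ) ≤ 1 - t) ht.1.le (by ring)
    have hs : slope (fun s : ℝ => φ (p + s • (w - p))) 0 t
        = (φ (p + t • (w - p)) - φ p) / t := by
      simp [slope_def_field]
    rw [hs, div_le_iff₀ ht.1]
    nlinarith [hcomb]
  linarith

lemma descent_lemma (φ : E → ℝ) (φ' : E → E) (hφgrad : ∀ p, HasGradientAt φ (φ' p) p)
    (L : ℝ) (a b : E)
    (hLip : ∀ t ∈ Set.Icc (0:ℝ) 1, ‖φ' (a + t • (b - a)) - φ' a‖ ≤ L * (t * ‖b - a‖)) :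
    φ b ≤ φ a + ⟪φ' a, b - a⟫ + L / 2 * ‖b - a‖ ^ 2 := by
  set v := b - a with hv
  set f : ℝ → ℝ := fun s => φ (a + s • v) - s * ⟪φ' a, v⟫ - s ^ 2 * (L / 2 * ‖v‖ ^ 2) with hf
  have hderiv : ∀ t : ℝ,
      HasDerivAt f (⟪φ' (a + t • v), v⟫ - ⟪φ' a, v⟫ - 2 * t * (L / 2 * ‖v‖ ^ 2)) t := by
    intro t
    have h1 := lineDeriv_aux φ φ' hφgrad a v t
    have h2 : HasDerivAt (fun s : ℝ => s * ⟪φ' a, v⟫) ⟪φ' a, v⟫ t := by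
      simpa using (hasDerivAt_id t).mul_const ⟪φ' a, v⟫
    have h3 : HasDerivAt (fun s : ℝ => s ^ 2 * (L / 2 * ‖v‖ ^ 2))
        (2 * t * (L / 2 * ‖v‖ ^ 2)) t := by
      simpa using (hasDerivAt_pow 2 t).mul_const (L / 2 * ‖v‖ ^ 2)
    exact (h1.sub h2).sub h3
  have hanti : AntitoneOn f (Set.Icc 0 1) := by
    apply antitoneOn_of_deriv_nonpos (convex_Icc 0 1)
    · exact fun t _ => (hderiv t).continuousAt.continuousWithinAt
    · exact fun t ht => (hderiv t).differentiableAt.differentiableWithinAt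
    · intro t ht
      rw [interior_Icc] at ht
      rw [(hderiv t).deriv]
      have hip : ⟪φ' (a + t • v), v⟫ - ⟪φ' a, v⟫ ≤ ‖φ' (a + t • v) - φ' a‖ * ‖v‖ := by
        rw [← inner_sub_left]; exact real_inner_le_norm _ _
      have hb := hLip t ⟨ht.1.le, ht.2.le⟩
      have h2 : ‖φ' (a + t • v) - φ' a‖ * ‖v‖ ≤ L * (t * ‖v‖) * ‖v‖ :=
        mul_le_mul_of_nonneg_right hb (norm_nonneg _)
      nlinarith [hip, h2]
  have h01 := hanti (Set.left_mem_Icc.mpr zero_le_one) (Set.right_mem_Icc.mpr zero_le_one)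
    zero_le_one
  have hf0 : f 0 = φ a := by simp [hf]
  have hab : a + (1:ℝ) • v = b := by rw [hv]; module
  have hf1 : f 1 = φ b - ⟪φ' a, v⟫ - L / 2 * ‖v‖ ^ 2 := by
    simp only [hf, hab, one_pow, one_mul]
  rw [hf0, hf1] at h01
  linarith

omit [CompleteSpace E] in
lemma norm_combo (a b : E) (t : ℝ) :
    ‖(1 - t) • a + t • b‖ ^ 2
      = (1 - t) * ‖a‖ ^ 2 + t * ‖b‖ ^ 2 - t * (1 - t) * ‖a - b‖ ^ 2 := by
  have h : ∀ w : E, ‖w‖ ^ 2 = ⟪w, w⟫ := fun w => by rw [real_inner_self_eq_norm_sq]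
  simp only [h]
  simp only [inner_add_left, inner_add_right, inner_sub_left, inner_sub_right,
    real_inner_smul_left, real_inner_smul_right]
  rw [real_inner_comm b a]
  ring

end Aux

set_option maxHeartbeats 1000000 in
/-- One accelerated stochastic gradient step (deterministic inequality): with
`y = (1−1/β)x + (1/β)z`, `g = ∇φ(y) + δ`, `z⁺` the prox point and
`x⁺ = (1−1/β)x + (1/β)z⁺`, for every `u ∈ X`,
`βγ(Φ(x⁺)−Φ(u)) + ½‖u−z⁺‖² ≤ (β−1)γ(Φ(x)−Φ(u)) + ½‖u−z‖² + γ⟨δ, u−z⁺⟩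
    − ((β−Lγ)/(2β))‖z⁺−z‖²`. -/
theorem asg_one_step_deterministic {n : ℕ}
    (X : Set (EuclideanSpace ℝ (Fin n))) (hXne : X.Nonempty)
    (hXclosed : IsClosed X) (hXconv : Convex ℝ X)
    (ψ φ : EuclideanSpace ℝ (Fin n) → ℝ)
    (hψ : ConvexOn ℝ Set.univ ψ) (hφ : ConvexOn ℝ Set.univ φ)
    (φ' : EuclideanSpace ℝ (Fin n) → EuclideanSpace ℝ (Fin n))
    (hφgrad : ∀ x, HasGradientAt φ (φ' x) x)
    (L : ℝ) (hL : 0 < L)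
    (hLip : ∀ x ∈ X, ∀ y ∈ X, ‖φ' x - φ' y‖ ≤ L * ‖x - y‖)
    (β γ : ℝ) (hβ : 1 ≤ β) (hγ : 0 < γ) (hLγ : L * γ < β)
    (x z : EuclideanSpace ℝ (Fin n)) (hx : x ∈ X) (hz : z ∈ X)
    (δ : EuclideanSpace ℝ (Fin n))
    (y : EuclideanSpace ℝ (Fin n)) (hy : y = (1 - β⁻¹) • x + β⁻¹ • z)
    (g : EuclideanSpace ℝ (Fin n)) (hg : g = φ' y + δ)
    (zp : EuclideanSpace ℝ (Fin n)) (hzp : zp ∈ X)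
    (hprox : ∀ u ∈ X,
      γ * (⟪g, zp⟫ + ψ zp) + ‖zp - z‖ ^ 2 / 2 ≤
        γ * (⟪g, u⟫ + ψ u) + ‖u - z‖ ^ 2 / 2)
    (xp : EuclideanSpace ℝ (Fin n)) (hxp : xp = (1 - β⁻¹) • x + β⁻¹ • zp) :
    ∀ u ∈ X,
      β * γ * ((φ xp + ψ xp) - (φ u + ψ u)) + ‖u - zp‖ ^ 2 / 2 ≤
        (β - 1) * γ * ((φ x + ψ x) - (φ u + ψ u)) + ‖u - z‖ ^ 2 / 2 +
        γ * ⟪δ, u - zp⟫ - (β - L * γ) / (2 * β) * ‖zp - z‖ ^ 2 := by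
  intro u hu
  have hβ0 : (0:ℝ) < β := lt_of_lt_of_le one_pos hβ
  have hβne : β ≠ 0 := ne_of_gt hβ0
  have hinv0 : (0:ℝ) ≤ β⁻¹ := inv_nonneg.mpr hβ0.le
  have hinv1 : β⁻¹ ≤ 1 := by
    rw [inv_le_one_iff₀]; right; exact hβ
  have hyX : y ∈ X := by
    rw [hy]; exact hXconv hx hz (by linarith) hinv0 (by ring)
  have hxpX : xp ∈ X := by
    rw [hxp]; exact hXconv hx hzp (by linarith) hinv0 (by ring)
  -- descent lemma
  have hdesc : φ xp ≤ φ y + ⟪φ' y, xp - y⟫ + L / 2 * ‖xp - y‖ ^ 2 := by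
    apply descent_lemma φ φ' hφgrad L y xp
    intro t ht
    have hmem : y + t • (xp - y) ∈ X := by
      have he : y + t • (xp - y) = (1 - t) • y + t • xp := by module
      rw [he]; exact hXconv hyX hxpX (by linarith [ht.2]) ht.1 (by ring)
    calc ‖φ' (y + t • (xp - y)) - φ' y‖ ≤ L * ‖(y + t • (xp - y)) - y‖ :=
          hLip _ hmem y hyX
      _ = L * (t * ‖xp - y‖) := by
          rw [add_sub_cancel_left, norm_smul, Real.norm_eq_abs, abs_of_nonneg ht.1]
  have hxpy : xp - y = β⁻¹ • (zp - z) := by rw [hxp, hy]; module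
  have e1 : ⟪φ' y, xp - y⟫ = β⁻¹ * ⟪φ' y, zp - z⟫ := by
    rw [hxpy, real_inner_smul_right]
  have e2 : ‖xp - y‖ ^ 2 = β⁻¹ ^ 2 * ‖zp - z‖ ^ 2 := by
    rw [hxpy, norm_smul, Real.norm_eq_abs, abs_of_nonneg hinv0, mul_pow]
  rw [e1, e2] at hdesc
  -- convexity gradient inequalities
  have h2 : φ y + ⟪φ' y, u - y⟫ ≤ φ u := grad_convex_le φ hφ φ' hφgrad y u
  have h3 : φ y + ⟪φ' y, x - y⟫ ≤ φ x := grad_convex_le φ hφ φ' hφgrad y x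
  -- ψ convexity
  have h4 : ψ xp ≤ (1 - β⁻¹) * ψ x + β⁻¹ * ψ zp := by
    rw [hxp]
    simpa using hψ.2 (Set.mem_univ x) (Set.mem_univ zp) (by linarith) hinv0 (by ring)
  -- three point property of the prox step
  have h5 : γ * (⟪g, zp⟫ + ψ zp) + ‖zp - z‖ ^ 2 / 2 + ‖u - zp‖ ^ 2 / 2 ≤
      γ * (⟪g, u⟫ + ψ u) + ‖u - z‖ ^ 2 / 2 := by
    have hD0 : (0:ℝ) ≤ ‖u - zp‖ ^ 2 := sq_nonneg _
    rw [show γ * (⟪g, zp⟫ + ψ zp) + ‖zp - z‖ ^ 2 / 2 + ‖u - zp‖ ^ 2 / 2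
        = (γ * (⟪g, zp⟫ + ψ zp) + ‖zp - z‖ ^ 2 / 2 + ‖u - zp‖ ^ 2 / 2) from rfl]
    apply le_of_forall_pos_le_add
    intro ε hε
    set D := ‖u - zp‖ ^ 2 with hD
    set t := min (1/2 : ℝ) (ε / (D + 1)) with ht
    have hD1 : (0:ℝ) < D + 1 := by linarith
    have ht0 : 0 < t := lt_min (by norm_num) (div_pos hε hD1)
    have ht1 : t ≤ 1/2 := min_le_left _ _
    have htD : t * D ≤ ε := by
      have h1 : t ≤ ε / (D + 1) := min_le_right _ _
      have h2 : t * D ≤ (ε / (D + 1)) * D := mul_le_mul_of_nonneg_right h1 hD0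
      have h3 : (ε / (D + 1)) * D ≤ ε := by
        rw [div_mul_eq_mul_div, div_le_iff₀ hD1]
        nlinarith
      linarith
    have hmem : zp + t • (u - zp) ∈ X := by
      have he : zp + t • (u - zp) = (1 - t) • zp + t • u := by module
      rw [he]; exact hXconv hzp hu (by linarith) ht0.le (by ring)
    have hpx := hprox _ hmem
    have hiner : ⟪g, zp + t • (u - zp)⟫ = (1 - t) * ⟪g, zp⟫ + t * ⟪g, u⟫ := by
      have he : zp + t • (u - zp) = (1 - t) • zp + t • u := by module
      rw [he, inner_add_right, real_inner_smul_right, real_inner_smul_right]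
    have hpsi : ψ (zp + t • (u - zp)) ≤ (1 - t) * ψ zp + t * ψ u := by
      have he : zp + t • (u - zp) = (1 - t) • zp + t • u := by module
      rw [he]
      simpa using hψ.2 (Set.mem_univ zp) (Set.mem_univ u) (by linarith) ht0.le (by ring)
    have hnorm : ‖(zp + t • (u - zp)) - z‖ ^ 2
        = (1 - t) * ‖zp - z‖ ^ 2 + t * ‖u - z‖ ^ 2 - t * (1 - t) * D := by
      have he : (zp + t • (u - zp)) - z = (1 - t) • (zp - z) + t • (u - z) := by module
      rw [he, norm_combo]
      have : (zp - z) - (u - z) = -(u - zp) := by module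
      rw [this, norm_neg]
    rw [hiner, hnorm] at hpx
    -- from hpx: F zp ≤ (1-t) F zp + t F u - t(1-t)/2 D + t (ψ-bound slack)
    have key : γ * (⟪g, zp⟫ + ψ zp) + ‖zp - z‖ ^ 2 / 2 ≤
        (1 - t) * (γ * (⟪g, zp⟫ + ψ zp) + ‖zp - z‖ ^ 2 / 2)
        + t * (γ * (⟪g, u⟫ + ψ u) + ‖u - z‖ ^ 2 / 2) - t * (1 - t) / 2 * D := by
      have hpsi' := mul_le_mul_of_nonneg_left hpsi hγ.le
      linarith [hpx, hpsi']
    -- divide by t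
    have key2 : γ * (⟪g, zp⟫ + ψ zp) + ‖zp - z‖ ^ 2 / 2 + (1 - t) / 2 * D ≤
        γ * (⟪g, u⟫ + ψ u) + ‖u - z‖ ^ 2 / 2 := by
      have hmul : t * (γ * (⟪g, zp⟫ + ψ zp) + ‖zp - z‖ ^ 2 / 2 + (1 - t) / 2 * D) ≤
          t * (γ * (⟪g, u⟫ + ψ u) + ‖u - z‖ ^ 2 / 2) := by linarith [key]
      exact le_of_mul_le_mul_left hmul ht0
    linarith [key2, htD, mul_nonneg ht0.le hD0]
  -- inner product decompositions
  have huz : u - z = (u - y) + (β - 1) • (x - y) := by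
    rw [hy]; match_scalars <;> (field_simp; try ring)
  have hiuz : ⟪φ' y, u - z⟫ = ⟪φ' y, u - y⟫ + (β - 1) * ⟪φ' y, x - y⟫ := by
    rw [huz, inner_add_right, real_inner_smul_right]
  have hginner : ⟪g, u⟫ - ⟪g, zp⟫
      = ⟪φ' y, u - y⟫ + (β - 1) * ⟪φ' y, x - y⟫ - ⟪φ' y, zp - z⟫ + ⟪δ, u - zp⟫ := by
    rw [hg]
    have : ⟪φ' y + δ, u⟫ - ⟪φ' y + δ, zp⟫
        = ⟪φ' y, u - z⟫ - ⟪φ' y, zp - z⟫ + ⟪δ, u - zp⟫ := by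
      simp only [inner_add_left, inner_sub_right]; ring
    rw [this, hiuz]
  -- scaled inequalities
  have h1' : β * γ * φ xp ≤ β * γ * φ y + γ * ⟪φ' y, zp - z⟫
      + L * γ / (2 * β) * ‖zp - z‖ ^ 2 := by
    have hm := mul_le_mul_of_nonneg_left hdesc (by positivity : (0:ℝ) ≤ β * γ)
    have heq : β * γ * (φ y + β⁻¹ * ⟪φ' y, zp - z⟫ + L / 2 * (β⁻¹ ^ 2 * ‖zp - z‖ ^ 2))
        = β * γ * φ y + γ * ⟪φ' y, zp - z⟫ + L * γ / (2 * β) * ‖zp - z‖ ^ 2 := by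
      field_simp
    linarith [hm, heq.le, heq.ge]
  have h2' : γ * φ y + γ * ⟪φ' y, u - y⟫ ≤ γ * φ u := by
    linarith [mul_le_mul_of_nonneg_left h2 hγ.le]
  have h3' : (β - 1) * γ * φ y + (β - 1) * γ * ⟪φ' y, x - y⟫ ≤ (β - 1) * γ * φ x := by
    have hc : (0:ℝ) ≤ (β - 1) * γ := mul_nonneg (by linarith) hγ.le
    linarith [mul_le_mul_of_nonneg_left h3 hc]
  have h4' : β * γ * ψ xp ≤ (β - 1) * γ * ψ x + γ * ψ zp := by
    have hm := mul_le_mul_of_nonneg_left h4 (by positivity : (0:ℝ) ≤ β * γ)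
    have heq : β * γ * ((1 - β⁻¹) * ψ x + β⁻¹ * ψ zp)
        = (β - 1) * γ * ψ x + γ * ψ zp := by field_simp
    linarith [hm, heq.le, heq.ge]
  have h5' : γ * ψ zp + ‖zp - z‖ ^ 2 / 2 + ‖u - zp‖ ^ 2 / 2 ≤
      γ * (⟪φ' y, u - y⟫ + (β - 1) * ⟪φ' y, x - y⟫ - ⟪φ' y, zp - z⟫ + ⟪δ, u - zp⟫)
      + γ * ψ u + ‖u - z‖ ^ 2 / 2 := by
    have h6 : γ * (⟪g, u⟫ - ⟪g, zp⟫)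
        = γ * (⟪φ' y, u - y⟫ + (β - 1) * ⟪φ' y, x - y⟫ - ⟪φ' y, zp - z⟫ + ⟪δ, u - zp⟫) := by
      rw [hginner]
    linarith [h5, h6.le, h6.ge]
  have hS : (β - L * γ) / (2 * β) * ‖zp - z‖ ^ 2
      = ‖zp - z‖ ^ 2 / 2 - L * γ / (2 * β) * ‖zp - z‖ ^ 2 := by
    field_simp
  linarith [h1', h2', h3', h4', h5', hS.le, hS.ge]
end

section
/- Let (β_k) ⊆ [1,∞) and (γ_k) ⊆ (0,∞) satisfy β₁ = 1, 0 < (β_{k+1} − 1)γ_{k+1} ≤ β_kγ_k and 2Lγ_k ≤ β_k for all k ≥ 1, and let σ > 0. Let (Ω, μ) be a probability space and let measurable maps x_k, z_k, δ_k : Ω → ℝⁿ satisfy, pointwise for every ω and every k ≥ 1: x_k(ω), z_k(ω) ∈ X; y_k(ω) = (1 − 1/β_k)x_k(ω) + (1/β_k)z_k(ω); z_{k+1}(ω) minimizes u ↦ γ_k(⟨∇φ(y_k(ω)) + δ_k(ω), u⟩ + ψ(u)) + ½‖u − z_k(ω)‖² over X; and x_{k+1}(ω) = (1 − 1/β_k)x_k(ω)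 + (1/β_k)z_{k+1}(ω). Suppose x* ∈ X minimizes Φ over X, ∫ ‖δ_k‖² dμ ≤ σ² for all k, and ∫ ⟨δ_k(ω), x* − z_k(ω)⟩ dμ(ω) = 0 for all k. Then for every k ≥ 2: ∫ (Φ(x_k(ω)) − Φ(x*)) dμ(ω) ≤ (1/((β_k − 1)γ_k))·(½D² + σ²·Σ_{i=1}^{k−1} γ_i²). -/
open MeasureTheory RealInnerProductSpace

section AuxLemmas
open Set Filter

variable {E : Type*} [NormedAddCommGroup E] [InnerProductSpace ℝ E] [CompleteSpace E]

lemma norm_combo_sq (a b c : E) (t : ℝ) :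
    ‖(1 - t) • a + t • b - c‖ ^ 2 =
      (1 - t) * ‖a - c‖ ^ 2 + t * ‖b - c‖ ^ 2 - t * (1 - t) * ‖a - b‖ ^ 2 := by
  have h : (1 - t) • a + t • b - c = (1 - t) • (a - c) + t • (b - c) := by module
  rw [h]
  rw [← real_inner_self_eq_norm_sq, ← real_inner_self_eq_norm_sq,
    ← real_inner_self_eq_norm_sq, ← real_inner_self_eq_norm_sq]
  simp only [inner_add_left, inner_add_right, inner_sub_left, inner_sub_right,
    real_inner_smul_left, real_inner_smul_right]
  ring_nf


lemma curve_hasDerivAt {f : E → ℝ} {g : E} (a v : E) (t : ℝ)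
    (h : HasGradientAt f g (a + t • v)) :
    HasDerivAt (fun s : ℝ => f (a + s • v)) ⟪g, v⟫ t := by
  have hc : HasDerivAt (fun s : ℝ => a + s • v) v t := by
    simpa using ((hasDerivAt_id t).smul_const v).const_add a
  have hf : HasFDerivAt f ((InnerProductSpace.toDual ℝ E) g : E →L[ℝ] ℝ) (a + t • v) := h
  have := hf.comp_hasDerivAt t hc
  simpa [InnerProductSpace.toDual_apply_apply, Function.comp_def] using this

lemma convex_grad_ineq {f : E → ℝ} (hf : ConvexOn ℝ Set.univ f)
    {a g : E} (h : HasGradientAt f g a) (u : E) :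
    f a + ⟪g, u - a⟫ ≤ f u := by
  have hd : HasDerivAt (fun s : ℝ => f (a + s • (u - a))) ⟪g, u - a⟫ 0 :=
    curve_hasDerivAt a (u - a) 0 (by simpa using h)
  have hslope : Tendsto (slope (fun s : ℝ => f (a + s • (u - a))) 0) (nhdsWithin 0 {(0:ℝ)}ᶜ)
      (nhds ⟪g, u - a⟫) := (hasDerivAt_iff_tendsto_slope).1 hd
  have hslope' : Tendsto (slope (fun s : ℝ => f (a + s • (u - a))) 0) (nhdsWithin 0 (Ioi 0))
      (nhds ⟪g, u - a⟫) := hslope.mono_left (nhdsWithin_mono _ (fun s hs => ne_of_gt hs))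
  have hbound : ∀ᶠ t in nhdsWithin (0:ℝ) (Ioi 0),
      slope (fun s : ℝ => f (a + s • (u - a))) 0 t ≤ f u - f a := by
    filter_upwards [Ioo_mem_nhdsGT_of_mem (by norm_num : (0:ℝ) ∈ Ico (0:ℝ) 1)] with t ht
    have ht0 : 0 < t := ht.1
    have ht1 : t < 1 := ht.2
    have hcomb : f (a + t • (u - a)) ≤ (1 - t) * f a + t * f u := by
      have := hf.2 (mem_univ a) (mem_univ u) (by linarith : (0:ℝ) ≤ 1 - t)
        (le_of_lt ht0) (by ring)
      have heq : a + t • (u - a) = (1 - t) • a + t • u := by module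
      rw [heq]; exact this
    rw [slope_def_field]
    simp only [zero_smul, add_zero, sub_zero]
    rw [div_le_iff₀ ht0]
    nlinarith
  have := le_of_tendsto hslope' hbound
  linarith
lemma descent_lemma_s7 {f : E → ℝ} {f' : E → E} (hgrad : ∀ v, HasGradientAt f (f' v) v)
    {X : Set E} (hXconv : Convex ℝ X) {L : ℝ} (hL : 0 ≤ L)
    (hLip : ∀ x ∈ X, ∀ y ∈ X, ‖f' x - f' y‖ ≤ L * ‖x - y‖)
    {a b : E} (ha : a ∈ X) (hb : b ∈ X) :
    f b ≤ f a + ⟪f' a, b - a⟫ + L / 2 * ‖b - a‖ ^ 2 := by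
  set v := b - a with hv
  set d : ℝ → ℝ := fun t => ⟪f' (a + t • v), v⟫ with hd
  have hmem : ∀ t ∈ Icc (0:ℝ) 1, a + t • v ∈ X := by
    intro t ht
    have : a + t • v = (1 - t) • a + t • b := by rw [hv]; module
    rw [this]
    exact hXconv ha hb (by linarith [ht.2]) ht.1 (by ring)
  have hcont : ContinuousOn d (Icc 0 1) := by
    have : LipschitzOnWith (Real.toNNReal (L * ‖v‖ * ‖v‖)) d (Icc 0 1) := by
      rw [lipschitzOnWith_iff_dist_le_mul]
      intro s hs t ht
      have h1 : dist (d s) (d t) = |⟪f' (a + s • v) - f' (a + t • v), v⟫| := by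
        rw [Real.dist_eq, ← inner_sub_left]
      rw [h1]
      calc |⟪f' (a + s • v) - f' (a + t • v), v⟫| ≤ ‖f' (a + s • v) - f' (a + t • v)‖ * ‖v‖ :=
            abs_real_inner_le_norm _ _
        _ ≤ (L * ‖(a + s • v) - (a + t • v)‖) * ‖v‖ := by
            gcongr; exact hLip _ (hmem s hs) _ (hmem t ht)
        _ ≤ Real.toNNReal (L * ‖v‖ * ‖v‖) * dist s t := by
            have h2 : (a + s • v) - (a + t • v) = (s - t) • v := by module
            rw [h2, norm_smul, Real.norm_eq_abs, Real.dist_eq,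
              Real.coe_toNNReal _ (by positivity)]
            nlinarith [abs_nonneg (s - t), norm_nonneg v,
              mul_nonneg (mul_nonneg hL (norm_nonneg v)) (norm_nonneg v)]
    exact this.continuousOn
  have hint : IntervalIntegrable d MeasureTheory.volume 0 1 := by
    apply ContinuousOn.intervalIntegrable
    rwa [uIcc_of_le (by norm_num : (0:ℝ) ≤ 1)]
  have hftc : ∫ t in (0:ℝ)..1, d t = f (a + (1:ℝ) • v) - f (a + (0:ℝ) • v) := by
    refine intervalIntegral.integral_eq_sub_of_hasDerivAt (f := fun s : ℝ => f (a + s • v))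
      (fun t ht => ?_) hint
    exact curve_hasDerivAt a v t (hgrad _)
  have hcont2 : Continuous (fun t : ℝ => d 0 + L * t * ‖v‖ ^ 2) := by fun_prop
  have hub : ∫ t in (0:ℝ)..1, d t ≤ ∫ t in (0:ℝ)..1, (d 0 + L * t * ‖v‖ ^ 2) := by
    apply intervalIntegral.integral_mono_on (by norm_num) hint (hcont2.intervalIntegrable 0 1)
    intro t ht
    have key : d t - d 0 ≤ L * t * ‖v‖ ^ 2 := by
      have h1 : d t - d 0 = ⟪f' (a + t • v) - f' (a + (0:ℝ) • v), v⟫ := by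
        rw [hd]; simp only [← inner_sub_left]
      rw [h1]
      calc ⟪f' (a + t • v) - f' (a + (0:ℝ) • v), v⟫
          ≤ ‖f' (a + t • v) - f' (a + (0:ℝ) • v)‖ * ‖v‖ := real_inner_le_norm _ _
        _ ≤ (L * ‖(a + t • v) - (a + (0:ℝ) • v)‖) * ‖v‖ := by
            gcongr
            exact hLip _ (hmem t ht) _ (hmem 0 (by norm_num))
        _ = L * t * ‖v‖ ^ 2 := by
            have h2 : (a + t • v) - (a + (0:ℝ) • v) = t • v := by module
            rw [h2, norm_smul, Real.norm_eq_abs, abs_of_nonneg ht.1]; ring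
    linarith
  have hrhs : ∫ t in (0:ℝ)..1, (d 0 + L * t * ‖v‖ ^ 2) = d 0 + L / 2 * ‖v‖ ^ 2 := by
    rw [intervalIntegral.integral_add intervalIntegrable_const
      ((by fun_prop : Continuous (fun t : ℝ => L * t * ‖v‖ ^ 2)).intervalIntegrable 0 1)]
    simp only [intervalIntegral.integral_const, smul_eq_mul, one_mul, sub_zero]
    have h3 : ∫ t in (0:ℝ)..1, L * t * ‖v‖ ^ 2 = (L * ‖v‖ ^ 2) * ∫ t in (0:ℝ)..1, t := by
      rw [← intervalIntegral.integral_const_mul]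
      congr 1; ext t; ring
    rw [h3, integral_id]
    ring
  have hd0 : d 0 = ⟪f' a, v⟫ := by rw [hd]; norm_num
  have h10 : f (a + (1:ℝ) • v) = f b := by rw [hv]; congr 1; module
  have h00 : f (a + (0:ℝ) • v) = f a := by congr 1; module
  rw [h10, h00] at hftc
  nlinarith [hub.trans_eq hrhs, hftc, hd0]
lemma three_point {X : Set E} (hXconv : Convex ℝ X) {ψ : E → ℝ}
    (hψ : ConvexOn ℝ Set.univ ψ) {g z zp : E} {γ : ℝ} (hγ : 0 ≤ γ) (hzp : zp ∈ X)
    (hmin : ∀ u ∈ X, γ * (⟪g, zp⟫ + ψ zp) + ‖zp - z‖ ^ 2 / 2 ≤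
      γ * (⟪g, u⟫ + ψ u) + ‖u - z‖ ^ 2 / 2) :
    ∀ u ∈ X, γ * (⟪g, zp⟫ + ψ zp) + ‖zp - z‖ ^ 2 / 2 + ‖u - zp‖ ^ 2 / 2 ≤
      γ * (⟪g, u⟫ + ψ u) + ‖u - z‖ ^ 2 / 2 := by
  intro u hu
  set q := ‖u - zp‖ ^ 2 with hq
  have hqnn : 0 ≤ q := by positivity
  have key : ∀ t : ℝ, t ∈ Ioo (0:ℝ) 1 →
      γ * (⟪g, zp⟫ + ψ zp) + ‖zp - z‖ ^ 2 / 2 + q / 2 ≤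
        γ * (⟪g, u⟫ + ψ u) + ‖u - z‖ ^ 2 / 2 + t * q / 2 := by
    intro t ht
    set ut := (1 - t) • zp + t • u with hut
    have hutX : ut ∈ X := hXconv hzp hu (by linarith [ht.2]) (le_of_lt ht.1) (by ring)
    have h1 := hmin ut hutX
    have h2 : ⟪g, ut⟫ = (1 - t) * ⟪g, zp⟫ + t * ⟪g, u⟫ := by
      rw [hut, inner_add_right, real_inner_smul_right, real_inner_smul_right]
    have h3 : ψ ut ≤ (1 - t) * ψ zp + t * ψ u :=
      hψ.2 (Set.mem_univ zp) (Set.mem_univ u) (by linarith [ht.2]) (le_of_lt ht.1) (by ring)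
    have h4 : ‖ut - z‖ ^ 2 = (1 - t) * ‖zp - z‖ ^ 2 + t * ‖u - z‖ ^ 2
        - t * (1 - t) * ‖zp - u‖ ^ 2 := norm_combo_sq zp u z t
    have h5 : ‖zp - u‖ ^ 2 = q := by rw [hq, norm_sub_rev]
    rw [h4, h5, h2] at h1
    have h6 : γ * ((1 - t) * ⟪g, zp⟫ + t * ⟪g, u⟫ + ψ ut) ≤
        γ * ((1 - t) * (⟪g, zp⟫ + ψ zp) + t * (⟪g, u⟫ + ψ u)) := by
      apply mul_le_mul_of_nonneg_left _ hγ
      nlinarith [h3]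
    -- h1 : F zp ≤ γ*(...ut) + ((1-t)‖zp-z‖² + t‖u-z‖² - t(1-t)q)/2
    have h7 : γ * (⟪g, zp⟫ + ψ zp) + ‖zp - z‖ ^ 2 / 2 ≤
        (1 - t) * (γ * (⟪g, zp⟫ + ψ zp) + ‖zp - z‖ ^ 2 / 2)
        + t * (γ * (⟪g, u⟫ + ψ u) + ‖u - z‖ ^ 2 / 2) - t * (1 - t) * q / 2 := by
      nlinarith [h1, h6]
    have ht0 := ht.1
    nlinarith [h7, ht.1, ht.2, hqnn]
  -- take t → 0 : show LHS ≤ RHS using ∀ ε > 0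
  by_contra hcon
  push_neg at hcon
  set A := γ * (⟪g, zp⟫ + ψ zp) + ‖zp - z‖ ^ 2 / 2 + q / 2
  set B := γ * (⟪g, u⟫ + ψ u) + ‖u - z‖ ^ 2 / 2
  have hAB : B < A := hcon
  obtain ⟨t, ht, htq⟩ : ∃ t : ℝ, t ∈ Ioo (0:ℝ) 1 ∧ t * q / 2 < A - B := by
    refine ⟨min (1/2) ((A - B) / (q + 1)), ⟨?_, ?_⟩, ?_⟩
    · apply lt_min (by norm_num)
      apply div_pos (by linarith) (by linarith)
    · exact lt_of_le_of_lt (min_le_left _ _) (by norm_num)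
    · have h1 : min (1/2) ((A - B) / (q + 1)) ≤ (A - B) / (q + 1) := min_le_right _ _
      have h2 : (A - B) / (q + 1) * q / 2 < A - B := by
        rw [div_mul_eq_mul_div, div_div]
        rw [div_lt_iff₀ (by linarith)]
        nlinarith
      calc min (1/2) ((A - B) / (q + 1)) * q / 2 ≤ (A - B) / (q + 1) * q / 2 := by
            apply div_le_div_of_nonneg_right _ (by norm_num)
            · exact mul_le_mul_of_nonneg_right h1 hqnn
        _ < A - B := h2
  have := key t ht
  linarith
lemma step_pointwise {X : Set E} (hXconv : Convex ℝ X)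
    {ψ φ : E → ℝ} (hψ : ConvexOn ℝ Set.univ ψ) (hφ : ConvexOn ℝ Set.univ φ)
    {φ' : E → E} (hgrad : ∀ v, HasGradientAt φ (φ' v) v)
    {L : ℝ} (hL : 0 < L) (hLip : ∀ a ∈ X, ∀ b ∈ X, ‖φ' a - φ' b‖ ≤ L * ‖a - b‖)
    {β γ : ℝ} (hβ : 1 ≤ β) (hγ : 0 < γ) (hstep : 2 * L * γ ≤ β)
    {x z zp δ xs y xp : E} (hx : x ∈ X) (hz : z ∈ X) (hzp : zp ∈ X) (hxs : xs ∈ X)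
    (hy : y = (1 - β⁻¹) • x + β⁻¹ • z) (hxp : xp = (1 - β⁻¹) • x + β⁻¹ • zp)
    (hprox : ∀ u ∈ X, γ * (⟪φ' y + δ, zp⟫ + ψ zp) + ‖zp - z‖ ^ 2 / 2 ≤
        γ * (⟪φ' y + δ, u⟫ + ψ u) + ‖u - z‖ ^ 2 / 2) :
    β * γ * ((φ xp + ψ xp) - (φ xs + ψ xs)) + ‖xs - zp‖ ^ 2 / 2 ≤
      (β - 1) * γ * ((φ x + ψ x) - (φ xs + ψ xs)) + ‖xs - z‖ ^ 2 / 2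
      + γ * ⟪δ, xs - z⟫ + γ ^ 2 * ‖δ‖ ^ 2 := by
  have hβ0 : (0:ℝ) < β := lt_of_lt_of_le zero_lt_one hβ
  have hβne : β ≠ 0 := ne_of_gt hβ0
  have hβi0 : (0:ℝ) ≤ β⁻¹ := by positivity
  have hβinv : β * β⁻¹ = 1 := mul_inv_cancel₀ hβne
  have hβi1 : β⁻¹ ≤ 1 := by nlinarith
  set g := φ' y with hg
  have hyX : y ∈ X := by rw [hy]; exact hXconv hx hz (by linarith) hβi0 (by ring)
  have hxpX : xp ∈ X := by rw [hxp]; exact hXconv hx hzp (by linarith) hβi0 (by ring)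
  have Hdesc : φ xp ≤ φ y + ⟪g, xp - y⟫ + L / 2 * ‖xp - y‖ ^ 2 :=
    descent_lemma_s7 hgrad hXconv hL.le hLip hyX hxpX
  have hxpy : xp - y = β⁻¹ • (zp - z) := by rw [hxp, hy]; module
  have hip : ⟪g, xp - y⟫ = β⁻¹ * (⟪g, zp⟫ - ⟪g, z⟫) := by
    rw [hxpy, real_inner_smul_right, inner_sub_right]
  have hnp : ‖xp - y‖ ^ 2 = β⁻¹ ^ 2 * ‖zp - z‖ ^ 2 := by
    rw [hxpy, norm_smul, Real.norm_eq_abs, abs_of_nonneg hβi0, mul_pow]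
  have M1 : β * γ * φ xp ≤ β * γ * φ y + γ * (⟪g, zp⟫ - ⟪g, z⟫)
      + L * γ * β⁻¹ / 2 * ‖zp - z‖ ^ 2 := by
    have h := mul_le_mul_of_nonneg_left Hdesc (le_of_lt (mul_pos hβ0 hγ))
    rw [hip, hnp] at h
    refine h.trans_eq ?_
    field_simp
  have Mq : L * γ * β⁻¹ / 2 * ‖zp - z‖ ^ 2 ≤ 1 / 4 * ‖zp - z‖ ^ 2 := by
    have h1 : L * γ * β⁻¹ ≤ 1 / 2 := by
      rw [mul_inv_le_iff₀ hβ0]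
      linarith
    have h2 : (0:ℝ) ≤ ‖zp - z‖ ^ 2 := by positivity
    nlinarith
  have Hψc : ψ xp ≤ (1 - β⁻¹) * ψ x + β⁻¹ * ψ zp := by
    rw [hxp]
    exact hψ.2 (Set.mem_univ x) (Set.mem_univ zp) (by linarith) hβi0 (by ring)
  have M2 : β * γ * ψ xp ≤ (β - 1) * γ * ψ x + γ * ψ zp := by
    have h := mul_le_mul_of_nonneg_left Hψc (le_of_lt (mul_pos hβ0 hγ))
    refine h.trans_eq ?_
    field_simp
  have H3 := three_point hXconv hψ hγ.le hzp hprox xs hxs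
  simp only [inner_add_left] at H3
  have Hc1 : φ y + ⟪g, xs - y⟫ ≤ φ xs := convex_grad_ineq hφ (hgrad y) xs
  have Hc2 : φ y + ⟪g, x - y⟫ ≤ φ x := convex_grad_ineq hφ (hgrad y) x
  have N1 : γ * (φ y + ⟪g, xs - y⟫) ≤ γ * φ xs := mul_le_mul_of_nonneg_left Hc1 hγ.le
  have N2 : (β - 1) * γ * (φ y + ⟪g, x - y⟫) ≤ (β - 1) * γ * φ x :=
    mul_le_mul_of_nonneg_left Hc2 (mul_nonneg (by linarith) hγ.le)
  have E1 : ⟪g, xs⟫ - ⟪g, z⟫ = ⟪g, xs - y⟫ + (β - 1) * ⟪g, x - y⟫ := by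
    have hv : xs - z = (xs - y) + (β - 1) • (x - y) := by
      rw [hy]; match_scalars <;> (try field_simp) <;> ring
    calc ⟪g, xs⟫ - ⟪g, z⟫ = ⟪g, xs - z⟫ := (inner_sub_right g xs z).symm
      _ = ⟪g, xs - y⟫ + (β - 1) * ⟪g, x - y⟫ := by
          rw [hv, inner_add_right, real_inner_smul_right]
  have E1γ := congrArg (fun r => γ * r) E1
  have E2 : ⟪δ, xs⟫ - ⟪δ, zp⟫ = ⟪δ, xs - z⟫ + ⟪δ, z - zp⟫ := by
    have h : ⟪δ, xs - z⟫ + ⟪δ, z - zp⟫ = ⟪δ, (xs - z) + (z - zp)⟫ := (inner_add_right _ _ _).symm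
    have h2 : (xs - z) + (z - zp) = xs - zp := by module
    rw [h, h2, inner_sub_right]
  have E2γ := congrArg (fun r => γ * r) E2
  have Hyoung : ⟪δ, z - zp⟫ ≤ γ * ‖δ‖ ^ 2 + ‖zp - z‖ ^ 2 / (4 * γ) := by
    have h1 : ⟪δ, z - zp⟫ ≤ ‖δ‖ * ‖z - zp‖ := real_inner_le_norm _ _
    have h2 : ‖z - zp‖ = ‖zp - z‖ := norm_sub_rev _ _
    rw [h2] at h1
    have h3 : ‖δ‖ * ‖zp - z‖ ≤ γ * ‖δ‖ ^ 2 + ‖zp - z‖ ^ 2 / (4 * γ) := by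
      rw [← sub_nonneg]
      have key : γ * ‖δ‖ ^ 2 + ‖zp - z‖ ^ 2 / (4 * γ) - ‖δ‖ * ‖zp - z‖
          = (2 * γ * ‖δ‖ - ‖zp - z‖) ^ 2 / (4 * γ) := by field_simp; ring
      rw [key]
      positivity
    linarith
  have M5 : γ * ⟪δ, z - zp⟫ ≤ γ ^ 2 * ‖δ‖ ^ 2 + 1 / 4 * ‖zp - z‖ ^ 2 := by
    have h := mul_le_mul_of_nonneg_left Hyoung hγ.le
    refine h.trans_eq ?_
    field_simp
  linarith [M1, Mq, M2, H3, N1, N2, M5, E1γ, E2γ]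

end AuxLemmas

/-- Expected bound for the accelerated stochastic gradient scheme: if `β₁ = 1`,
`0 < (β_{k+1}−1)γ_{k+1} ≤ β_kγ_k`, `2Lγ_k ≤ β_k`, `∫‖δ_k‖² ≤ σ²`, and
`∫⟨δ_k, x*−z_k⟩ dμ = 0`, then for `k ≥ 2`,
`∫(Φ(x_k)−Φ(x*)) dμ ≤ (1/((β_k−1)γ_k))·(½D² + σ²·Σ_{i=1}^{k−1} γ_i²)`. -/
theorem asg_expected_bound {n : ℕ} {Ω : Type*} [MeasurableSpace Ω]
    (μ : Measure Ω) [IsProbabilityMeasure μ]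
    (X : Set (EuclideanSpace ℝ (Fin n))) (hXne : X.Nonempty)
    (hXcompact : IsCompact X) (hXconv : Convex ℝ X)
    (D : ℝ) (hD : 0 < D) (hdiam : ∀ x ∈ X, ∀ y ∈ X, ‖x - y‖ ≤ D)
    (ψ φ : EuclideanSpace ℝ (Fin n) → ℝ)
    (hψ : ConvexOn ℝ Set.univ ψ) (hφ : ConvexOn ℝ Set.univ φ)
    (φ' : EuclideanSpace ℝ (Fin n) → EuclideanSpace ℝ (Fin n))
    (hφgrad : ∀ x, HasGradientAt φ (φ' x) x)
    (L : ℝ) (hL : 0 < L)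
    (hLip : ∀ x ∈ X, ∀ y ∈ X, ‖φ' x - φ' y‖ ≤ L * ‖x - y‖)
    (β γ : ℕ → ℝ) (hβ1 : β 1 = 1)
    (hβ : ∀ k, 1 ≤ k → 1 ≤ β k) (hγpos : ∀ k, 1 ≤ k → 0 < γ k)
    (hcoupling : ∀ k, 1 ≤ k →
      0 < (β (k + 1) - 1) * γ (k + 1) ∧ (β (k + 1) - 1) * γ (k + 1) ≤ β k * γ k)
    (hstep : ∀ k, 1 ≤ k → 2 * L * γ k ≤ β k)
    (σ : ℝ) (hσ : 0 < σ)
    (x z y δ : ℕ → Ω → EuclideanSpace ℝ (Fin n))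
    (hxmeas : ∀ k, Measurable (x k)) (hzmeas : ∀ k, Measurable (z k))
    (hδmeas : ∀ k, Measurable (δ k))
    (hxX : ∀ k, 1 ≤ k → ∀ ω, x k ω ∈ X) (hzX : ∀ k, 1 ≤ k → ∀ ω, z k ω ∈ X)
    (hy : ∀ k, 1 ≤ k → ∀ ω, y k ω = (1 - (β k)⁻¹) • x k ω + (β k)⁻¹ • z k ω)
    (hprox : ∀ k, 1 ≤ k → ∀ ω, ∀ u ∈ X,
      γ k * (⟪φ' (y k ω) + δ k ω, z (k + 1) ω⟫ + ψ (z (k + 1) ω)) +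
          ‖z (k + 1) ω - z k ω‖ ^ 2 / 2 ≤
        γ k * (⟪φ' (y k ω) + δ k ω, u⟫ + ψ u) + ‖u - z k ω‖ ^ 2 / 2)
    (hxrec : ∀ k, 1 ≤ k → ∀ ω,
      x (k + 1) ω = (1 - (β k)⁻¹) • x k ω + (β k)⁻¹ • z (k + 1) ω)
    (xstar : EuclideanSpace ℝ (Fin n)) (hxstarX : xstar ∈ X)
    (hxstaropt : ∀ u ∈ X, φ xstar + ψ xstar ≤ φ u + ψ u)
    (hδint : ∀ k, 1 ≤ k → Integrable (fun ω => ‖δ k ω‖ ^ 2) μ)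
    (hδsq : ∀ k, 1 ≤ k → ∫ ω, ‖δ k ω‖ ^ 2 ∂μ ≤ σ ^ 2)
    (hδmean : ∀ k, 1 ≤ k → ∫ ω, ⟪δ k ω, xstar - z k ω⟫ ∂μ = 0) :
    ∀ k, 2 ≤ k →
      ∫ ω, ((φ (x k ω) + ψ (x k ω)) - (φ xstar + ψ xstar)) ∂μ ≤
        1 / ((β k - 1) * γ k) *
          (D ^ 2 / 2 + σ ^ 2 * ∑ i ∈ Finset.Icc 1 (k - 1), γ i ^ 2) := by
  have hφc : Continuous φ := by
    have := hφ.continuousOn isOpen_univ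
    rwa [← continuousOn_univ]
  have hψc : Continuous ψ := by
    have := hψ.continuousOn isOpen_univ
    rwa [← continuousOn_univ]
  -- generic integrability of continuous functions of X-valued measurable maps
  have hintX : ∀ (f : EuclideanSpace ℝ (Fin n) → ℝ), Continuous f →
      ∀ (w : Ω → EuclideanSpace ℝ (Fin n)), Measurable w → (∀ ω, w ω ∈ X) →
      Integrable (fun ω => f (w ω)) μ := by
    intro f hf w hw hwX
    obtain ⟨C, hC⟩ := hXcompact.exists_bound_of_continuousOn hf.continuousOn
    exact (integrable_const C).mono' ((hf.measurable.comp hw).aestronglyMeasurable)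
      (Filter.Eventually.of_forall fun ω => hC _ (hwX ω))
  set Φs : ℝ := φ xstar + ψ xstar with hΦs
  let A : ℕ → ℝ := fun j => ∫ ω, ((φ (x j ω) + ψ (x j ω)) - Φs) ∂μ
  let R : ℕ → ℝ := fun j => ∫ ω, ‖xstar - z j ω‖ ^ 2 / 2 ∂μ
  have IΦ : ∀ j, 1 ≤ j → Integrable (fun ω => (φ (x j ω) + ψ (x j ω)) - Φs) μ := by
    intro j hj
    exact hintX (fun v => (φ v + ψ v) - Φs) (by fun_prop) (x j) (hxmeas j) (hxX j hj)
  have IR : ∀ j, 1 ≤ j → Integrable (fun ω => ‖xstar - z j ω‖ ^ 2 / 2) μ := by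
    intro j hj
    exact hintX (fun v => ‖xstar - v‖ ^ 2 / 2) (by fun_prop) (z j) (hzmeas j) (hzX j hj)
  have Icross : ∀ j, 1 ≤ j → Integrable (fun ω => ⟪δ j ω, xstar - z j ω⟫) μ := by
    intro j hj
    have hmeas : Measurable (fun ω => ⟪δ j ω, xstar - z j ω⟫) :=
      (hδmeas j).inner (measurable_const.sub (hzmeas j))
    refine (((hδint j hj).add (integrable_const (D ^ 2))).div_const 2).mono'
      hmeas.aestronglyMeasurable (Filter.Eventually.of_forall fun ω => ?_)
    have h1 : |⟪δ j ω, xstar - z j ω⟫| ≤ ‖δ j ω‖ * ‖xstar - z j ω‖ :=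
      abs_real_inner_le_norm _ _
    have h2 : ‖xstar - z j ω‖ ≤ D := hdiam _ hxstarX _ (hzX j hj ω)
    have h3 : 0 ≤ ‖δ j ω‖ := norm_nonneg _
    have h4 : 0 ≤ ‖xstar - z j ω‖ := norm_nonneg _
    rw [Real.norm_eq_abs]
    calc |⟪δ j ω, xstar - z j ω⟫| ≤ ‖δ j ω‖ * D := h1.trans (by nlinarith)
      _ ≤ (‖δ j ω‖ ^ 2 + D ^ 2) / 2 := by nlinarith [sq_nonneg (‖δ j ω‖ - D)]
  -- one-step inequality in expectation
  have key : ∀ m, 1 ≤ m →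
      β m * γ m * A (m + 1) + R (m + 1) ≤
        (β m - 1) * γ m * A m + R m + γ m ^ 2 * σ ^ 2 := by
    intro m hm
    have hm1 : 1 ≤ m + 1 := by omega
    have hpt : ∀ ω,
        β m * γ m * ((φ (x (m + 1) ω) + ψ (x (m + 1) ω)) - Φs) +
            ‖xstar - z (m + 1) ω‖ ^ 2 / 2 ≤
          (β m - 1) * γ m * ((φ (x m ω) + ψ (x m ω)) - Φs) +
            ‖xstar - z m ω‖ ^ 2 / 2 +
            γ m * ⟪δ m ω, xstar - z m ω⟫ + γ m ^ 2 * ‖δ m ω‖ ^ 2 := by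
      intro ω
      exact step_pointwise hXconv hψ hφ hφgrad hL hLip (hβ m hm) (hγpos m hm)
        (hstep m hm) (hxX m hm ω) (hzX m hm ω) (hzX (m + 1) hm1 ω) hxstarX
        (hy m hm ω) (hxrec m hm ω) (fun u hu => hprox m hm ω u hu)
    have hIL : Integrable (fun ω =>
        β m * γ m * ((φ (x (m + 1) ω) + ψ (x (m + 1) ω)) - Φs) +
          ‖xstar - z (m + 1) ω‖ ^ 2 / 2) μ :=
      ((IΦ (m + 1) hm1).const_mul _).add (IR (m + 1) hm1)
    have hIR : Integrable (fun ω =>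
        (β m - 1) * γ m * ((φ (x m ω) + ψ (x m ω)) - Φs) +
          ‖xstar - z m ω‖ ^ 2 / 2 +
          γ m * ⟪δ m ω, xstar - z m ω⟫ + γ m ^ 2 * ‖δ m ω‖ ^ 2) μ :=
      ((((IΦ m hm).const_mul _).add (IR m hm)).add
        ((Icross m hm).const_mul _)).add ((hδint m hm).const_mul _)
    have hmono := integral_mono hIL hIR hpt
    have hLeq : ∫ ω, (β m * γ m * ((φ (x (m + 1) ω) + ψ (x (m + 1) ω)) - Φs) +
        ‖xstar - z (m + 1) ω‖ ^ 2 / 2) ∂μ = β m * γ m * A (m + 1) + R (m + 1) := by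
      rw [integral_add ((IΦ (m + 1) hm1).const_mul _) (IR (m + 1) hm1),
        integral_const_mul]
    have J1 : Integrable (fun ω => (β m - 1) * γ m * ((φ (x m ω) + ψ (x m ω)) - Φs) +
        ‖xstar - z m ω‖ ^ 2 / 2) μ := ((IΦ m hm).const_mul _).add (IR m hm)
    have J2 : Integrable (fun ω => (β m - 1) * γ m * ((φ (x m ω) + ψ (x m ω)) - Φs) +
        ‖xstar - z m ω‖ ^ 2 / 2 + γ m * ⟪δ m ω, xstar - z m ω⟫) μ :=
      J1.add ((Icross m hm).const_mul _)
    have hReq : ∫ ω, ((β m - 1) * γ m * ((φ (x m ω) + ψ (x m ω)) - Φs) +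
        ‖xstar - z m ω‖ ^ 2 / 2 +
        γ m * ⟪δ m ω, xstar - z m ω⟫ + γ m ^ 2 * ‖δ m ω‖ ^ 2) ∂μ =
        (β m - 1) * γ m * A m + R m + γ m ^ 2 * ∫ ω, ‖δ m ω‖ ^ 2 ∂μ := by
      rw [integral_add J2 ((hδint m hm).const_mul _),
        integral_add J1 ((Icross m hm).const_mul _),
        integral_add ((IΦ m hm).const_mul _) (IR m hm),
        integral_const_mul, integral_const_mul, integral_const_mul,
        hδmean m hm]
      ring
    rw [hLeq, hReq] at hmono
    have hδb : γ m ^ 2 * ∫ ω, ‖δ m ω‖ ^ 2 ∂μ ≤ γ m ^ 2 * σ ^ 2 :=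
      mul_le_mul_of_nonneg_left (hδsq m hm) (sq_nonneg _)
    linarith
  -- telescoping
  have main : ∀ m : ℕ, (β (m + 1) - 1) * γ (m + 1) * A (m + 1) + R (m + 1) ≤
      R 1 + σ ^ 2 * ∑ i ∈ Finset.Icc 1 m, γ i ^ 2 := by
    intro m
    induction m with
    | zero => simp [hβ1]
    | succ m ih =>
      have hm1 : 1 ≤ m + 1 := by omega
      have hA : 0 ≤ A (m + 1 + 1) := integral_nonneg fun ω =>
        sub_nonneg.2 (hxstaropt _ (hxX (m + 1 + 1) (by omega) ω))
      have hc := hcoupling (m + 1) hm1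
      have h1 : (β (m + 1 + 1) - 1) * γ (m + 1 + 1) * A (m + 1 + 1) ≤
          β (m + 1) * γ (m + 1) * A (m + 1 + 1) :=
        mul_le_mul_of_nonneg_right hc.2 hA
      have h2 := key (m + 1) hm1
      have hsum : ∑ i ∈ Finset.Icc 1 (m + 1), γ i ^ 2 =
          (∑ i ∈ Finset.Icc 1 m, γ i ^ 2) + γ (m + 1) ^ 2 :=
        Finset.sum_Icc_succ_top hm1 _
      rw [hsum]
      nlinarith [ih, h1, h2]
  intro k hk
  have hk1 : 1 ≤ k - 1 := by omega
  have hkm : k - 1 + 1 = k := by omega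
  have hmain := main (k - 1)
  rw [hkm] at hmain
  have hR1 : R 1 ≤ D ^ 2 / 2 := by
    have h1 : R 1 ≤ ∫ _ω, D ^ 2 / 2 ∂μ := by
      apply integral_mono (IR 1 le_rfl) (integrable_const _)
      intro ω
      have h2 : ‖xstar - z 1 ω‖ ≤ D := hdiam _ hxstarX _ (hzX 1 le_rfl ω)
      have h3 : 0 ≤ ‖xstar - z 1 ω‖ := norm_nonneg _
      simp only
      nlinarith
    simpa using h1
  have hRk : 0 ≤ R k := integral_nonneg fun ω => by positivity
  have hcpos : 0 < (β k - 1) * γ k := by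
    have := (hcoupling (k - 1) hk1).1
    rwa [hkm] at this
  show A k ≤ 1 / ((β k - 1) * γ k) * (D ^ 2 / 2 + σ ^ 2 * ∑ i ∈ Finset.Icc 1 (k - 1), γ i ^ 2)
  rw [one_div, inv_mul_eq_div, le_div_iff₀ hcpos]
  nlinarith [hmain, hR1, hRk]
end
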